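/- arXiv:2601.15790 — 4 statements merged into one kernel-verified Lean document; each statement's English description precedes it below -/
import Mathlib

section
/- Let a < b be real numbers and let g : ℝ → ℝ be continuously differentiable on [a, b] with g(a) = 0. Then ∫_a^b g(t)² dt ≤ (2(b − a)/π)² · ∫_a^b g′(t)² dt. -/
open MeasureTheory intervalIntegral Real Set Filter Topology

/-!
For `0 ≤ k` with `k (b - a) < π / 2`, the function `h x = k tan (k (b - x))` is a bounded solution
on `[a, b]` of the Riccati equation `h' = -(k² + h²)` with `h b = 0`. Expanding the square and
integrating the cross term `2 h g g'` by parts gives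
`∫ g'² - k² ∫ g² = ∫ (g' - h g)² + [h g²]ₐᵇ ≥ 0`, the boundary term vanishing since `g a = 0 = h b`.
Letting `k` increase to `π / (2 (b - a))`, where `h` would blow up at `a`, gives the claim.
-/

theorem integral_sub_mul_sq_eq_of_riccati {a b k : ℝ} (hab : a ≤ b) {g g' h : ℝ → ℝ}
    (hg : ∀ t ∈ Icc a b, HasDerivAt g (g' t) t) (hg' : ContinuousOn g' (Icc a b))
    (hh : ∀ t ∈ Icc a b, HasDerivAt h (-(k ^ 2 + h t ^ 2)) t) :
    ∫ t in a..b, (g' t - h t * g t) ^ 2 =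
      (∫ t in a..b, g' t ^ 2) - k ^ 2 * (∫ t in a..b, g t ^ 2) - (h b * g b ^ 2 - h a * g a ^ 2) := by
  rw [← uIcc_of_le hab] at hg hg' hh
  have hgc : ContinuousOn g (uIcc a b) := HasDerivAt.continuousOn hg
  have hhc : ContinuousOn h (uIcc a b) := HasDerivAt.continuousOn hh
  have hD : ∀ t ∈ uIcc a b, HasDerivAt (fun x => h x * g x ^ 2)
      (-(k ^ 2 + h t ^ 2) * g t ^ 2 + h t * (2 * g t * g' t)) t := fun t ht =>
    ((hh t ht).fun_mul ((hg t ht).fun_pow 2)).congr_deriv (by norm_num)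
  have hDi : IntervalIntegrable
      (fun t => -(k ^ 2 + h t ^ 2) * g t ^ 2 + h t * (2 * g t * g' t)) volume a b :=
    (((continuousOn_const.add (hhc.pow 2)).neg.mul (hgc.pow 2)).add
      (hhc.mul ((continuousOn_const.mul hgc).mul hg'))).intervalIntegrable
  have hg'i : IntervalIntegrable (fun t => g' t ^ 2) volume a b := (hg'.pow 2).intervalIntegrable
  have hgi : IntervalIntegrable (fun t => k ^ 2 * g t ^ 2) volume a b :=
    (continuousOn_const.mul (hgc.pow 2)).intervalIntegrable
  rw [← integral_eq_sub_of_hasDerivAt hD hDi, ← intervalIntegral.integral_const_mul,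
    ← integral_sub hg'i hgi, ← integral_sub (hg'i.sub hgi) hDi]
  exact integral_congr fun t _ => by ring

theorem sq_mul_integral_sq_le_of_riccati {a b k : ℝ} (hab : a ≤ b) {g g' h : ℝ → ℝ}
    (hg : ∀ t ∈ Icc a b, HasDerivAt g (g' t) t) (hg' : ContinuousOn g' (Icc a b))
    (hh : ∀ t ∈ Icc a b, HasDerivAt h (-(k ^ 2 + h t ^ 2)) t) (hga : g a = 0) (hhb : h b = 0) :
    k ^ 2 * ∫ t in a..b, g t ^ 2 ≤ ∫ t in a..b, g' t ^ 2 := by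
  have hnonneg : 0 ≤ ∫ t in a..b, (g' t - h t * g t) ^ 2 :=
    integral_nonneg hab fun t _ => sq_nonneg _
  rw [integral_sub_mul_sq_eq_of_riccati hab hg hg' hh, hga, hhb] at hnonneg
  linarith

theorem hasDerivAt_mul_tan_mul_sub {k b t : ℝ} (ht : cos (k * (b - t)) ≠ 0) :
    HasDerivAt (fun x => k * tan (k * (b - x))) (-(k ^ 2 + (k * tan (k * (b - t))) ^ 2)) t := by
  have hlin : HasDerivAt (fun x => k * (b - x)) (-k) t := by
    simpa using ((hasDerivAt_id t).const_sub b).const_mul k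
  refine (((hasDerivAt_tan ht).comp t hlin).const_mul k).congr_deriv ?_
  rw [tan_eq_sin_div_cos]
  field_simp
  nlinarith [sin_sq_add_cos_sq (k * (b - t))]

theorem sq_mul_integral_sq_le_integral_deriv_sq {a b k : ℝ} (hab : a ≤ b) (hk : 0 ≤ k)
    (hkba : k * (b - a) < π / 2) {g g' : ℝ → ℝ}
    (hg : ∀ t ∈ Icc a b, HasDerivAt g (g' t) t) (hg' : ContinuousOn g' (Icc a b))
    (hga : g a = 0) :
    k ^ 2 * ∫ t in a..b, g t ^ 2 ≤ ∫ t in a..b, g' t ^ 2 := by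
  refine sq_mul_integral_sq_le_of_riccati (h := fun x => k * tan (k * (b - x))) hab hg hg'
    (fun t ht => ?_) hga (by simp)
  refine hasDerivAt_mul_tan_mul_sub (cos_pos_of_mem_Ioo ⟨?_, ?_⟩).ne'
  · nlinarith [pi_pos, ht.2]
  · nlinarith [ht.1]

/-- One-endpoint Wirtinger inequality: if `g` is continuously differentiable on
`[a, b]` and `g a = 0`, then `∫ g² ≤ (2(b-a)/π)² ∫ g′²`. -/
theorem wirtinger_one_endpoint
    (a b : ℝ) (hab : a < b) (g g' : ℝ → ℝ)
    (hderiv : ∀ t ∈ Set.Icc a b, HasDerivAt g (g' t) t)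
    (hcont : ContinuousOn g' (Set.Icc a b))
    (h0 : g a = 0) :
    ∫ t in a..b, (g t) ^ 2 ≤ (2 * (b - a) / π) ^ 2 * ∫ t in a..b, (g' t) ^ 2 := by
  have hba : 0 < b - a := sub_pos.mpr hab
  set c := π / (2 * (b - a)) with hc
  have hc_pos : 0 < c := by positivity
  have hbound : c ^ 2 * ∫ t in a..b, g t ^ 2 ≤ ∫ t in a..b, g' t ^ 2 := by
    refine le_of_tendsto (x := 𝓝[<] c) (((continuous_pow 2).mul continuous_const).tendsto c
      |>.mono_left nhdsWithin_le_nhds) ?_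
    filter_upwards [Ioo_mem_nhdsLT hc_pos] with k hk
    refine sq_mul_integral_sq_le_integral_deriv_sq hab.le hk.1.le ?_ hderiv hcont h0
    calc k * (b - a) < c * (b - a) := by gcongr; exact hk.2
      _ = π / 2 := by rw [hc]; field_simp
  have hinv : (2 * (b - a) / π) ^ 2 = (c ^ 2)⁻¹ := by rw [hc]; field_simp
  rwa [hinv, inv_mul_eq_div, le_div_iff₀ (by positivity), mul_comm]
end

section
/- Let N ≥ 1, let t_0 < t_1 < ⋯ < t_N be real numbers, let T_max = max_{0 ≤ n ≤ N−1} (t_{n+1} − t_n), and let f : ℝ → ℝ be continuously differentiable on [t_0, t_N]. For each n let s_n = (t_n + t_{n+1})/2. Then Σ_{n=0}^{N−1} ∫_{t_n}^{t_{n+1}} (f(t) − f(s_n))² dt ≤ (T_max²/π²) · ∫_{t_0}^{t_N} f′(t)² dt. -/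
/-!
Put `g = f - f(s_n)` on `[t_n, t_{n+1}]`; it vanishes at the midpoint, so it suffices to prove the
half-interval Wirtinger inequality `∫ g² ≤ (2L/π)² ∫ g'²` on an interval of length `L` at one of
whose endpoints `g` vanishes, and then sum over the halves and bound every gap by `T_max`.
For the half-interval inequality use Picone's identity
`(g' - w g)² = g'² - k² g² - (w g²)'`, valid whenever `w' = -(k² + w²)`.
The Riccati solution `w = -k tan (k (x - p))`, with `p` the endpoint where `g` is free, makes both
boundary terms vanish and is smooth on the interval as long as `k < π / (2L)`; letting `k → π / (2L)`
gives the sharp constant.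
-/

open MeasureTheory intervalIntegral Real Set

theorem mul_integral_sq_le_integral_deriv_sq_of_riccati {a b c : ℝ} (hab : a ≤ b)
    {g g' w : ℝ → ℝ} (hg : ∀ x ∈ Icc a b, HasDerivAt g (g' x) x)
    (hg' : ContinuousOn g' (Icc a b)) (hw : ∀ x ∈ Icc a b, HasDerivAt w (-(c + w x ^ 2)) x)
    (hbd : w a * g a ^ 2 ≤ w b * g b ^ 2) :
    c * ∫ x in a..b, g x ^ 2 ≤ ∫ x in a..b, g' x ^ 2 := by
  have g_cont : ContinuousOn g (Icc a b) := fun x hx => (hg x hx).continuousAt.continuousWithinAt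
  have w_cont : ContinuousOn w (Icc a b) := fun x hx => (hw x hx).continuousAt.continuousWithinAt
  set H' : ℝ → ℝ := fun x => -(c + w x ^ 2) * g x ^ 2 + w x * (2 * g x * g' x)
  have hH : ∀ x ∈ uIcc a b, HasDerivAt (fun x => w x * g x ^ 2) (H' x) x := by
    intro x hx
    rw [uIcc_of_le hab] at hx
    refine ((hw x hx).fun_mul ((hg x hx).fun_pow 2)).congr_deriv ?_
    simp only [H']; ring
  have hH'_int : IntervalIntegrable H' volume a b := by
    apply ContinuousOn.intervalIntegrable_of_Icc hab
    fun_prop (disch := assumption)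
  have hsq_int : IntervalIntegrable (fun x => (g' x - w x * g x) ^ 2) volume a b := by
    apply ContinuousOn.intervalIntegrable_of_Icc hab
    fun_prop (disch := assumption)
  have hpicone : ∀ x, g' x ^ 2 - c * g x ^ 2 = (g' x - w x * g x) ^ 2 + H' x := by
    intro x; simp only [H']; ring
  have hJ_int : IntervalIntegrable (fun x => g' x ^ 2) volume a b :=
    (hg'.pow 2).intervalIntegrable_of_Icc hab
  have hI_int : IntervalIntegrable (fun x => g x ^ 2) volume a b :=
    (g_cont.pow 2).intervalIntegrable_of_Icc hab
  have hsq_nonneg : 0 ≤ ∫ x in a..b, (g' x - w x * g x) ^ 2 :=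
    integral_nonneg hab fun x _ => sq_nonneg _
  have hpicone_integral : ∫ x in a..b, (g' x ^ 2 - c * g x ^ 2) =
      (∫ x in a..b, (g' x - w x * g x) ^ 2) + (w b * g b ^ 2 - w a * g a ^ 2) := by
    simp_rw [hpicone]
    rw [integral_add hsq_int hH'_int, integral_eq_sub_of_hasDerivAt hH hH'_int]
  rw [integral_sub hJ_int (hI_int.const_mul c), intervalIntegral.integral_const_mul] at hpicone_integral
  linarith

theorem hasDerivAt_neg_mul_tan_mul_sub {k p x : ℝ} (hx : cos (k * (x - p)) ≠ 0) :
    HasDerivAt (fun y => -k * tan (k * (y - p))) (-(k ^ 2 + (-k * tan (k * (x - p))) ^ 2)) x := by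
  have hlin : HasDerivAt (fun y => k * (y - p)) k x := by
    simpa using ((hasDerivAt_id x).sub_const p).const_mul k
  refine (((hasDerivAt_tan hx).comp x hlin).const_mul (-k)).congr_deriv ?_
  rw [tan_eq_sin_div_cos]
  field_simp
  nlinarith [sin_sq_add_cos_sq (k * (x - p))]

theorem integral_sq_le_of_eq_zero_or_eq_zero {a b : ℝ} (hab : a ≤ b) {g g' : ℝ → ℝ}
    (hg : ∀ x ∈ Icc a b, HasDerivAt g (g' x) x) (hg' : ContinuousOn g' (Icc a b))
    (h0 : g a = 0 ∨ g b = 0) :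
    ∫ x in a..b, g x ^ 2 ≤ (2 * (b - a) / π) ^ 2 * ∫ x in a..b, g' x ^ 2 := by
  rcases hab.eq_or_lt with rfl | hab
  · simp
  set K := π / (2 * (b - a))
  have hK : 0 < K := by positivity
  have hk_bound : ∀ k ∈ Ioo 0 K, k ^ 2 * ∫ x in a..b, g x ^ 2 ≤ ∫ x in a..b, g' x ^ 2 := by
    intro k ⟨hk, hkK⟩
    have hkL : k * (b - a) < π / 2 := by
      rw [lt_div_iff₀ (by positivity)] at hkK; linarith
    have hw : ∀ p ∈ Icc a b, ∀ x ∈ Icc a b, HasDerivAt (fun y => -k * tan (k * (y - p)))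
        (-(k ^ 2 + (-k * tan (k * (x - p))) ^ 2)) x := by
      intro p hp x hx
      refine hasDerivAt_neg_mul_tan_mul_sub (cos_pos_of_mem_Ioo ⟨?_, ?_⟩).ne'
      · nlinarith [hp.1, hp.2, hx.1, hx.2]
      · nlinarith [hp.1, hp.2, hx.1, hx.2]
    -- take `p` at the endpoint where `g` is not known to vanish
    rcases h0 with h0 | h0
    · exact mul_integral_sq_le_integral_deriv_sq_of_riccati hab.le hg hg'
        (hw b (right_mem_Icc.2 hab.le)) (by simp [h0])
    · exact mul_integral_sq_le_integral_deriv_sq_of_riccati hab.le hg hg'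
        (hw a (left_mem_Icc.2 hab.le)) (by simp [h0])
  have hK_bound : K ^ 2 * ∫ x in a..b, g x ^ 2 ≤ ∫ x in a..b, g' x ^ 2 := by
    have hlim : Filter.Tendsto (fun k => k ^ 2 * ∫ x in a..b, g x ^ 2) (nhdsWithin K (Iio K))
        (nhds (K ^ 2 * ∫ x in a..b, g x ^ 2)) :=
      ((continuous_pow 2).mul continuous_const).continuousWithinAt
    exact le_of_tendsto hlim (Filter.eventually_of_mem (Ioo_mem_nhdsLT hK) hk_bound)
  have hK_inv : (2 * (b - a) / π) ^ 2 = (K ^ 2)⁻¹ := by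
    simp only [K, ← inv_pow, inv_div]
  rw [hK_inv, inv_mul_eq_div, le_div_iff₀ (by positivity)]
  linarith

theorem integral_sub_midpoint_sq_le {a b : ℝ} (hab : a ≤ b) {f f' : ℝ → ℝ}
    (hf : ∀ x ∈ Icc a b, HasDerivAt f (f' x) x) (hf' : ContinuousOn f' (Icc a b)) :
    ∫ x in a..b, (f x - f ((a + b) / 2)) ^ 2 ≤ ((b - a) / π) ^ 2 * ∫ x in a..b, f' x ^ 2 := by
  set c := (a + b) / 2
  have hac : a ≤ c := by simp only [c]; linarith
  have hcb : c ≤ b := by simp only [c]; linarith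
  have hleft : Icc a c ⊆ Icc a b := Icc_subset_Icc_right hcb
  have hright : Icc c b ⊆ Icc a b := Icc_subset_Icc_left hac
  have hg : ∀ x ∈ Icc a b, HasDerivAt (fun y => f y - f c) (f' x) x :=
    fun x hx => (hf x hx).sub_const _
  have hg_cont : ContinuousOn (fun x => (f x - f c) ^ 2) (Icc a b) :=
    fun x hx => ((hg x hx).continuousAt.pow 2).continuousWithinAt
  have hf'_cont : ContinuousOn (fun x => f' x ^ 2) (Icc a b) := hf'.pow 2
  have h₁ := integral_sq_le_of_eq_zero_or_eq_zero hac (fun x hx => hg x (hleft hx))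
    (hf'.mono hleft) (Or.inr (sub_self _))
  have h₂ := integral_sq_le_of_eq_zero_or_eq_zero hcb (fun x hx => hg x (hright hx))
    (hf'.mono hright) (Or.inl (sub_self _))
  have hca : 2 * (c - a) = b - a := by simp only [c]; ring
  have hbc : 2 * (b - c) = b - a := by simp only [c]; ring
  rw [hca] at h₁
  rw [hbc] at h₂
  rw [← integral_add_adjacent_intervals ((hg_cont.mono hleft).intervalIntegrable_of_Icc hac)
      ((hg_cont.mono hright).intervalIntegrable_of_Icc hcb),
    ← integral_add_adjacent_intervals ((hf'_cont.mono hleft).intervalIntegrable_of_Icc hac)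
      ((hf'_cont.mono hright).intervalIntegrable_of_Icc hcb)]
  linarith

/-- Summed midpoint Wirtinger bound over a strictly increasing family of sampling
instants, with `Tmax` the largest inter-sample gap. -/
theorem summed_wirtinger_bound
    (N : ℕ) (hN : 1 ≤ N) (t : ℕ → ℝ)
    (ht : ∀ n < N, t n < t (n + 1))
    (Tmax : ℝ)
    (hT : Tmax = (Finset.range N).sup' (Finset.nonempty_range_iff.mpr (by omega))
      (fun n => t (n + 1) - t n))
    (f f' : ℝ → ℝ)
    (hderiv : ∀ x ∈ Set.Icc (t 0) (t N), HasDerivAt f (f' x) x)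
    (hcont : ContinuousOn f' (Set.Icc (t 0) (t N))) :
    ∑ n ∈ Finset.range N,
        ∫ x in (t n)..(t (n + 1)), (f x - f ((t n + t (n + 1)) / 2)) ^ 2
      ≤ (Tmax ^ 2 / π ^ 2) * ∫ x in (t 0)..(t N), (f' x) ^ 2 := by
  have ht_mono : MonotoneOn t (Iic N) := monotoneOn_of_le_succ ordConnected_Iic
    fun n _ _ hn => by
      rw [Order.succ_eq_add_one] at hn ⊢
      exact (ht n (mem_Iic.1 hn)).le
  have hsub : ∀ n < N, Icc (t n) (t (n + 1)) ⊆ Icc (t 0) (t N) := fun n hn =>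
    Icc_subset_Icc (ht_mono (by simp) (by simp; omega) (Nat.zero_le n))
      (ht_mono (by simp; omega) (by simp) hn)
  have hgap : ∀ n ∈ Finset.range N, t (n + 1) - t n ≤ Tmax := fun n hn =>
    hT ▸ Finset.le_sup' (fun n => t (n + 1) - t n) hn
  calc ∑ n ∈ Finset.range N,
        ∫ x in (t n)..(t (n + 1)), (f x - f ((t n + t (n + 1)) / 2)) ^ 2
      ≤ ∑ n ∈ Finset.range N, (Tmax ^ 2 / π ^ 2) * ∫ x in (t n)..(t (n + 1)), f' x ^ 2 := by
        refine Finset.sum_le_sum fun n hn => ?_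
        have hn' := Finset.mem_range.1 hn
        refine (integral_sub_midpoint_sq_le (ht n hn').le (fun x hx => hderiv x (hsub n hn' hx))
          (hcont.mono (hsub n hn'))).trans ?_
        rw [← div_pow]
        refine mul_le_mul_of_nonneg_right ?_ (integral_nonneg (ht n hn').le fun x _ => sq_nonneg _)
        have hgap_nonneg : 0 ≤ t (n + 1) - t n := sub_nonneg.2 (ht n hn').le
        gcongr
        exact hgap n hn
    _ = (Tmax ^ 2 / π ^ 2) * ∫ x in (t 0)..(t N), f' x ^ 2 := by
        rw [← Finset.mul_sum, sum_integral_adjacent_intervals (f := fun x => f' x ^ 2) fun n hn =>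
          ((hcont.pow 2).mono (hsub n hn)).intervalIntegrable_of_Icc (ht n hn).le]
end

section
/- (Theorem 1, firing-interval guarantee.) Let t₀ < t₁ be real numbers, c > 0, α ∈ (0, 1), β > 0, and let f : ℝ → ℝ be differentiable with derivative f′, with |f(t)| ≤ c for all t ∈ [t₀, t₁], and f², f′² interval-integrable on [t₀, t₁]. Define e(t) = ∫_{t₀}^{t} f(u)² du and d(t) = ∫_{t₀}^{t} f′(u)² du, and set E = e(t₁), D = d(t₁); assume E > 0 and D > 0. Define the variable bias b(t) = c + 1/(π√(α · e(t))) for t ∈ (t₀, t₁], and suppose f + b is interval-integrable on [t₀, t₁] and the firing equation ∫_{t₀}^{t₁} (f(t) + b(t)) dt = 1/√(D + βE) holds (the right-hand side being the threshold Δ(t₁) = 1/√(d(t₁) + β e(t₁))). Then t₁ − t₀ ≤ π √(α E/(D + β E)) < π √(E/D); in particular the firing interval satisfies the local convergence condition T = t₁ − t₀ < π √(E/D). -/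
open MeasureTheory intervalIntegral Real Set

/-!
Since `|f| ≤ c`, the integrand of the firing equation satisfies
`f + b ≥ 1 / (π √(α e)) ≥ 1 / (π √(α E))` wherever `e > 0`, and integrating over `(t₀, t₁]`
gives `T / (π √(α E)) ≤ 1 / √(D + β E)`.

The substance is that `e > 0` on all of `(t₀, t₁]` (where `e = 0` the bias formula only gives `b = c`,
because `1 / 0 = 0`). If `s` were the last zero of `e`, then `f s = 0`, so by
Cauchy–Schwarz `f(u)² ≤ (u - s) ∫ f'²` and `e(t) ≤ (t - s)² ∫ f'²`; then `f + b` would dominate a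
multiple of `1 / (t - s)`, which is not integrable at `s`.
-/

lemma intervalIntegrable_of_sq {g : ℝ → ℝ} {a b : ℝ} (hg : AEStronglyMeasurable g volume)
    (hg2 : IntervalIntegrable (fun x => g x ^ 2) volume a b) : IntervalIntegrable g volume a b :=
  ⟨((memLp_two_iff_integrable_sq hg.restrict).2 hg2.1).integrable one_le_two,
    ((memLp_two_iff_integrable_sq hg.restrict).2 hg2.2).integrable one_le_two⟩

lemma sq_intervalIntegral_le_mul_integral_sq {g : ℝ → ℝ} {a b : ℝ} (hab : a ≤ b)
    (hg : IntervalIntegrable g volume a b)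
    (hg2 : IntervalIntegrable (fun x => g x ^ 2) volume a b) :
    (∫ x in a..b, g x) ^ 2 ≤ (b - a) * ∫ x in a..b, g x ^ 2 := by
  rcases hab.eq_or_lt with rfl | hlt
  · simp
  have hL : volume.real (Ioc a b) = b - a := by simp [hab]
  have jensen := (even_two.convexOn_pow (𝕜 := ℝ)).map_set_average_le
    (continuous_pow 2).continuousOn isClosed_univ (by simp [hlt]) (by simp) (by simp)
    ((intervalIntegrable_iff_integrableOn_Ioc_of_le hab).1 hg)
    ((intervalIntegrable_iff_integrableOn_Ioc_of_le hab).1 hg2)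
  rw [setAverage_eq, setAverage_eq, hL, ← integral_of_le hab, ← integral_of_le hab,
    smul_eq_mul, smul_eq_mul, mul_pow, inv_pow, ← div_eq_inv_mul, ← div_eq_inv_mul,
    div_le_div_iff₀ (by positivity) (sub_pos.2 hlt)] at jensen
  nlinarith

lemma integral_sq_le_of_eq_zero {f f' : ℝ → ℝ} {a b : ℝ} (hab : a ≤ b)
    (hf : ∀ x ∈ Icc a b, HasDerivAt f (f' x) x) (hf' : IntervalIntegrable f' volume a b)
    (hf'2 : IntervalIntegrable (fun x => f' x ^ 2) volume a b) (hfa : f a = 0) :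
    ∀ x ∈ Icc a b, ∫ y in a..x, f y ^ 2 ≤ (x - a) ^ 2 * ∫ y in a..b, f' y ^ 2 := by
  set M := ∫ y in a..b, f' y ^ 2
  have hsub {u : ℝ} (hu : u ∈ Icc a b) : uIcc a u ⊆ uIcc a b :=
    uIcc_subset_uIcc_left (uIcc_of_le hab ▸ hu)
  have hpoint : ∀ u ∈ Icc a b, f u ^ 2 ≤ (u - a) * M := by
    intro u hu
    have hftc : ∫ y in a..u, f' y = f u := by
      rw [integral_eq_sub_of_hasDerivAt (fun y hy => hf y (uIcc_of_le hab ▸ hsub hu hy))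
        (hf'.mono_set (hsub hu)), hfa, sub_zero]
    calc f u ^ 2 ≤ (u - a) * ∫ y in a..u, f' y ^ 2 := hftc ▸
          sq_intervalIntegral_le_mul_integral_sq hu.1 (hf'.mono_set (hsub hu))
            (hf'2.mono_set (hsub hu))
      _ ≤ (u - a) * M := mul_le_mul_of_nonneg_left
          (integral_mono_interval le_rfl hu.1 hu.2 (ae_of_all _ fun y => sq_nonneg _) hf'2)
          (sub_nonneg.2 hu.1)
  intro x hx
  have hcont : ContinuousOn (fun y => f y ^ 2) (uIcc a x) := fun y hy =>
    ((hf y (uIcc_of_le hab ▸ hsub hx hy)).continuousAt.pow 2).continuousWithinAt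
  have hM : 0 ≤ M := integral_nonneg hab fun y _ => sq_nonneg _
  calc ∫ y in a..x, f y ^ 2 ≤ ∫ _ in a..x, (x - a) * M :=
        integral_mono_on hx.1 hcont.intervalIntegrable intervalIntegrable_const fun y hy =>
          (hpoint y ⟨hy.1, hy.2.trans hx.2⟩).trans
            (mul_le_mul_of_nonneg_right (by linarith [hy.2]) hM)
    _ = (x - a) ^ 2 * M := by rw [intervalIntegral.integral_const, smul_eq_mul]; ring

lemma not_intervalIntegrable_of_inv_sub_le {g : ℝ → ℝ} {a b : ℝ} (hab : a < b)
    (hg : ∀ x ∈ Ioc a b, (x - a)⁻¹ ≤ g x) : ¬ IntervalIntegrable g volume a b := by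
  intro hgi
  have hinv : IntervalIntegrable (fun x => (x - a)⁻¹) volume a b := by
    refine hgi.mono_fun (measurable_id.sub_const a).inv.aestronglyMeasurable ?_
    rw [uIoc_of_le hab.le]
    filter_upwards [ae_restrict_mem measurableSet_Ioc] with x hx
    have hx0 : 0 < (x - a)⁻¹ := inv_pos.2 (sub_pos.2 hx.1)
    rw [Real.norm_of_nonneg hx0.le, Real.norm_of_nonneg (hx0.le.trans (hg x hx))]
    exact hg x hx
  exact (intervalIntegrable_sub_inv_iff.1 hinv).elim hab.ne (· left_mem_uIcc)

lemma exists_mem_Ioo_eq_zero_and_pos_on_Ioc {F : ℝ → ℝ} {a b t : ℝ}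
    (hF : ContinuousOn F (Icc a b)) (hF0 : ∀ x ∈ Icc a b, 0 ≤ F x) (hFb : 0 < F b)
    (ht : t ∈ Ioc a b) (hFt : F t = 0) :
    ∃ s ∈ Ioo a b, F s = 0 ∧ ∀ x ∈ Ioc s b, 0 < F x := by
  obtain ⟨s, ⟨hs, hFs : F s = 0⟩, hmax⟩ := (isCompact_Icc.of_isClosed_subset
    (hF.preimage_isClosed_of_isClosed isClosed_Icc isClosed_singleton)
    inter_subset_left).exists_isGreatest ⟨t, Ioc_subset_Icc_self ht, hFt⟩
  refine ⟨s, ⟨ht.1.trans_le (hmax ⟨Ioc_subset_Icc_self ht, hFt⟩), ?_⟩, hFs, fun x hx => ?_⟩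
  · exact hs.2.lt_of_ne (by rintro rfl; exact hFb.ne' hFs)
  · have hxI : x ∈ Icc a b := ⟨hs.1.trans hx.1.le, hx.2⟩
    exact (hF0 x hxI).lt_of_ne fun h => hx.1.not_ge (hmax ⟨hxI, h.symm⟩)

lemma primitive_sq_pos_of_intervalIntegrable {f f' g : ℝ → ℝ} {a b : ℝ}
    (hf : ∀ x, HasDerivAt f (f' x) x) (hf' : IntervalIntegrable f' volume a b)
    (hf'2 : IntervalIntegrable (fun x => f' x ^ 2) volume a b)
    (hb : 0 < ∫ x in a..b, f x ^ 2) (hg : IntervalIntegrable g volume a b)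
    (hgF : ∀ t ∈ Ioc a b, 0 < ∫ x in a..t, f x ^ 2 → (√(∫ x in a..t, f x ^ 2))⁻¹ ≤ g t) :
    ∀ t ∈ Ioc a b, 0 < ∫ x in a..t, f x ^ 2 := by
  set F := fun t => ∫ x in a..t, f x ^ 2
  have hf2 : Continuous fun x => f x ^ 2 :=
    (continuous_iff_continuousAt.2 fun x => (hf x).continuousAt).pow 2
  have hFderiv (x : ℝ) : HasDerivAt F (f x ^ 2) x :=
    (hf2.integral_hasStrictDerivAt a x).hasDerivAt
  have hF0 : ∀ x ∈ Icc a b, 0 ≤ F x := fun x hx => integral_nonneg hx.1 fun _ _ => sq_nonneg _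
  intro t ht
  by_contra! hFt
  obtain ⟨s, hs, hFs, hpos⟩ := exists_mem_Ioo_eq_zero_and_pos_on_Ioc
    (fun x _ => (hFderiv x).continuousAt.continuousWithinAt) hF0 hb ht
    (le_antisymm hFt (hF0 t (Ioc_subset_Icc_self ht)))
  have hsb : uIcc s b ⊆ uIcc a b :=
    uIcc_subset_uIcc_right (uIcc_of_le (ht.1.trans_le ht.2).le ▸ Ioo_subset_Icc_self hs)
  -- `s` is an interior minimum of `F ≥ 0`, and `F' = f ^ 2`.
  have hfs : f s = 0 := by
    refine pow_eq_zero_iff two_ne_zero |>.1 <| IsLocalMin.hasDerivAt_eq_zero ?_ (hFderiv s)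
    filter_upwards [Icc_mem_nhds hs.1 hs.2] with x hx
    exact hFs ▸ hF0 x hx
  set M := ∫ x in s..b, f' x ^ 2
  have hsqrt (x : ℝ) (hx : x ∈ Ioc s b) : √(F x) ≤ √M * (x - s) := by
    have hFx : F x = ∫ y in s..x, f y ^ 2 := by
      rw [← sub_zero (F x), ← hFs]
      exact integral_interval_sub_left (hf2.intervalIntegrable a x) (hf2.intervalIntegrable a s)
    calc √(F x) ≤ √((x - s) ^ 2 * M) := sqrt_le_sqrt <| hFx ▸ integral_sq_le_of_eq_zero hs.2.le
          (fun y _ => hf y) (hf'.mono_set hsb) (hf'2.mono_set hsb) hfs x (Ioc_subset_Icc_self hx)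
      _ = √M * (x - s) := by
        rw [sqrt_mul (sq_nonneg _), sqrt_sq (sub_pos.2 hx.1).le, mul_comm]
  refine not_intervalIntegrable_of_inv_sub_le hs.2 (g := fun x => √M * g x) (fun x hx => ?_)
    ((hg.mono_set hsb).const_mul √M)
  have hFx := hpos x hx
  calc (x - s)⁻¹ ≤ √M * (√(F x))⁻¹ := by
        rw [← div_eq_mul_inv, le_div_iff₀ (sqrt_pos.2 hFx), inv_mul_le_iff₀ (sub_pos.2 hx.1),
          mul_comm]
        exact hsqrt x hx
    _ ≤ √M * g x :=
        mul_le_mul_of_nonneg_left (hgF x ⟨hs.1.trans hx.1, hx.2⟩ hFx) (sqrt_nonneg M)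

lemma sub_le_mul_integral_of_inv_le {h : ℝ → ℝ} {a b m : ℝ} (hab : a ≤ b) (hm : 0 < m)
    (hh : IntervalIntegrable h volume a b) (hle : ∀ x ∈ Ioc a b, m⁻¹ ≤ h x) :
    b - a ≤ m * ∫ x in a..b, h x := by
  have hint : (b - a) * m⁻¹ ≤ ∫ x in a..b, h x := by
    rw [← smul_eq_mul, ← intervalIntegral.integral_const]
    exact integral_mono_on_of_le_Ioo hab intervalIntegrable_const hh
      fun x hx => hle x (Ioo_subset_Ioc_self hx)
  rwa [← div_eq_mul_inv, div_le_iff₀ hm, mul_comm] at hint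

theorem VBT_IFTEM_firing_interval_guarantee_general
    (t₀ t₁ : ℝ) (ht : t₀ < t₁) (c α β : ℝ)
    (hα0 : 0 < α) (hα1 : α < 1) (hβ : 0 < β)
    (f f' : ℝ → ℝ)
    (hderiv : ∀ t : ℝ, HasDerivAt f (f' t) t)
    (hbound : ∀ t ∈ Set.Icc t₀ t₁, |f t| ≤ c)
    (hf'int : IntervalIntegrable (fun u => (f' u) ^ 2) volume t₀ t₁)
    (e : ℝ → ℝ)
    (he : ∀ t : ℝ, e t = ∫ u in t₀..t, (f u) ^ 2)
    (E D : ℝ) (hE : E = e t₁)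
    (hEpos : 0 < E) (hDpos : 0 < D)
    (b : ℝ → ℝ)
    (hbias : ∀ t ∈ Set.Ioc t₀ t₁, b t = c + 1 / (π * Real.sqrt (α * e t)))
    (hint : IntervalIntegrable (fun t => f t + b t) volume t₀ t₁)
    (hfire : ∫ t in t₀..t₁, (f t + b t) = 1 / Real.sqrt (D + β * E)) :
    t₁ - t₀ ≤ π * Real.sqrt (α * E / (D + β * E))
      ∧ π * Real.sqrt (α * E / (D + β * E)) < π * Real.sqrt (E / D) := by
  have hfb (t : ℝ) (htI : t ∈ Ioc t₀ t₁) : (π * √(α * e t))⁻¹ ≤ f t + b t := by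
    rw [← one_div]
    linarith [hbias t htI, neg_le_of_abs_le (hbound t (Ioc_subset_Icc_self htI))]
  have hf' : IntervalIntegrable f' volume t₀ t₁ := by
    refine intervalIntegrable_of_sq ?_ hf'int
    rw [show f' = deriv f from funext fun t => (hderiv t).deriv.symm]
    exact (measurable_deriv f).aestronglyMeasurable
  have he_pos : ∀ t ∈ Ioc t₀ t₁, 0 < e t := by
    simp only [he] at hfb hEpos hE ⊢
    refine primitive_sq_pos_of_intervalIntegrable hderiv hf' hf'int (hE ▸ hEpos)
      (hint.const_mul (π * √α)) fun t htI hpos => ?_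
    calc (√(∫ u in t₀..t, f u ^ 2))⁻¹ = (π * √α) * (π * √(α * ∫ u in t₀..t, f u ^ 2))⁻¹ := by
          rw [sqrt_mul hα0.le]; field_simp
      _ ≤ (π * √α) * (f t + b t) := mul_le_mul_of_nonneg_left (hfb t htI) (by positivity)
  have he_le (t : ℝ) (htI : t ∈ Ioc t₀ t₁) : e t ≤ E := by
    have hf : Continuous f := continuous_iff_continuousAt.2 fun u => (hderiv u).continuousAt
    rw [hE, he, he]
    exact integral_mono_interval le_rfl htI.1.le htI.2 (ae_of_all _ fun u => sq_nonneg _)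
      ((hf.pow 2).intervalIntegrable _ _)
  constructor
  · calc t₁ - t₀ ≤ π * √(α * E) * ∫ t in t₀..t₁, (f t + b t) :=
          sub_le_mul_integral_of_inv_le ht.le (by positivity) hint fun t htI =>
            le_trans (by have := he_pos t htI; gcongr; exact he_le t htI) (hfb t htI)
      _ = π * √(α * E / (D + β * E)) := by
          rw [hfire, sqrt_div (by positivity)]; ring
  · gcongr
    · exact mul_lt_of_lt_one_left hEpos hα1
    · exact le_add_of_nonneg_right (by positivity)

/-- Theorem 1 (firing-interval guarantee of the VBT-IF-TEM): with bias
`b(t) = c + 1/(π√(α e(t)))` and threshold `Δ(t₁) = 1/√(D + βE)`, the firing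
interval satisfies `t₁ - t₀ ≤ π√(αE/(D+βE)) < π√(E/D)`. -/
theorem VBT_IFTEM_firing_interval_guarantee
    (t₀ t₁ : ℝ) (ht : t₀ < t₁) (c α β : ℝ)
    (hc : 0 < c) (hα0 : 0 < α) (hα1 : α < 1) (hβ : 0 < β)
    (f f' : ℝ → ℝ)
    (hderiv : ∀ t : ℝ, HasDerivAt f (f' t) t)
    (hbound : ∀ t ∈ Set.Icc t₀ t₁, |f t| ≤ c)
    (hfint : IntervalIntegrable (fun u => (f u) ^ 2) volume t₀ t₁)
    (hf'int : IntervalIntegrable (fun u => (f' u) ^ 2) volume t₀ t₁)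
    (e d : ℝ → ℝ)
    (he : ∀ t : ℝ, e t = ∫ u in t₀..t, (f u) ^ 2)
    (hd : ∀ t : ℝ, d t = ∫ u in t₀..t, (f' u) ^ 2)
    (E D : ℝ) (hE : E = e t₁) (hD : D = d t₁)
    (hEpos : 0 < E) (hDpos : 0 < D)
    (b : ℝ → ℝ)
    (hbias : ∀ t ∈ Set.Ioc t₀ t₁, b t = c + 1 / (π * Real.sqrt (α * e t)))
    (hint : IntervalIntegrable (fun t => f t + b t) volume t₀ t₁)
    (hfire : ∫ t in t₀..t₁, (f t + b t) = 1 / Real.sqrt (D + β * E)) :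
    t₁ - t₀ ≤ π * Real.sqrt (α * E / (D + β * E))
      ∧ π * Real.sqrt (α * E / (D + β * E)) < π * Real.sqrt (E / D) :=
  VBT_IFTEM_firing_interval_guarantee_general t₀ t₁ ht c α β hα0 hα1 hβ f f' hderiv hbound hf'int e
    he E D hE hEpos hDpos b hbias hint hfire
end

section
/- (Theorem 2, firing-interval guarantee with shifted signal.) Let t₀ < t₁ be real numbers, c > 0, s > c, α ∈ (0, 1), β > 0, and let f : ℝ → ℝ be differentiable with derivative f′, with |f(t)| ≤ c for all t ∈ [t₀, t₁]. Set the shifted signal f̃(t) = f(t) + s, and define ẽ(t) = ∫_{t₀}^{t} f̃(u)² du and d̃(t) = ∫_{t₀}^{t} f′(u)² du, with Ẽ = ẽ(t₁) and D̃ = d̃(t₁); assume f̃², f′² are interval-integrable on [t₀, t₁] and Ẽ > 0, D̃ > 0. Define the variable bias b(t) = c − s + 1/(π√(α · ẽ(t))) for t ∈ (t₀, t₁], and suppose f̃ + b is interval-integrable on [t₀, t₁] and the firing equation ∫_{t₀}^{t₁} (f̃(t) + b(t)) dt = 1/√(D̃ + βẼ) holds (the right-hand side being the threshold Δ(t₁)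 = 1/√(d̃(t₁) + β ẽ(t₁))). Then t₁ − t₀ ≤ π √(α Ẽ/(D̃ + β Ẽ)) < π √(Ẽ/D̃); in particular the firing interval satisfies the local convergence condition for the shifted signal f̃. -/
open MeasureTheory intervalIntegral Real

/-- Theorem 2 (firing-interval guarantee of the biased VBT-IF-TEM with shifted
signal `f̃ = f + s`): with bias `b(t) = c - s + 1/(π√(α ẽ(t)))` and threshold
`Δ(t₁) = 1/√(D̃ + βẼ)`, the firing interval satisfies
`t₁ - t₀ ≤ π√(αẼ/(D̃+βẼ)) < π√(Ẽ/D̃)`. -/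
theorem biased_VBT_IFTEM_firing_interval_guarantee
    (t₀ t₁ : ℝ) (ht : t₀ < t₁) (c s α β : ℝ)
    (hc : 0 < c) (hs : c < s) (hα0 : 0 < α) (hα1 : α < 1) (hβ : 0 < β)
    (f f' : ℝ → ℝ)
    (hderiv : ∀ t : ℝ, HasDerivAt f (f' t) t)
    (hbound : ∀ t ∈ Set.Icc t₀ t₁, |f t| ≤ c)
    (ftilde : ℝ → ℝ) (hftilde : ∀ t : ℝ, ftilde t = f t + s)
    (hfint : IntervalIntegrable (fun u => (ftilde u) ^ 2) volume t₀ t₁)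
    (hf'int : IntervalIntegrable (fun u => (f' u) ^ 2) volume t₀ t₁)
    (etilde dtilde : ℝ → ℝ)
    (he : ∀ t : ℝ, etilde t = ∫ u in t₀..t, (ftilde u) ^ 2)
    (hd : ∀ t : ℝ, dtilde t = ∫ u in t₀..t, (f' u) ^ 2)
    (Etilde Dtilde : ℝ) (hE : Etilde = etilde t₁) (hD : Dtilde = dtilde t₁)
    (hEpos : 0 < Etilde) (hDpos : 0 < Dtilde)
    (b : ℝ → ℝ)
    (hbias : ∀ t ∈ Set.Ioc t₀ t₁, b t = c - s + 1 / (π * Real.sqrt (α * etilde t)))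
    (hint : IntervalIntegrable (fun t => ftilde t + b t) volume t₀ t₁)
    (hfire : ∫ t in t₀..t₁, (ftilde t + b t) = 1 / Real.sqrt (Dtilde + β * Etilde)) :
    t₁ - t₀ ≤ π * Real.sqrt (α * Etilde / (Dtilde + β * Etilde))
      ∧ π * Real.sqrt (α * Etilde / (Dtilde + β * Etilde))
          < π * Real.sqrt (Etilde / Dtilde) := by
  have hπ : 0 < π := Real.pi_pos
  have hDβE : 0 < Dtilde + β * Etilde := by positivity
  set K := Real.sqrt (Dtilde + β * Etilde) with hK
  have hKpos : 0 < K := Real.sqrt_pos.mpr hDβE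
  have hαE : 0 < α * Etilde := by positivity
  have hC : 0 < π * Real.sqrt (α * Etilde) := by positivity
  -- bounds on etilde on (t₀, t₁]
  have hmono : ∀ t ∈ Set.Ioc t₀ t₁, 0 < etilde t ∧ etilde t ≤ Etilde := by
    intro t ht'
    obtain ⟨ht0, ht1⟩ := ht'
    have hsub1 : Set.uIcc t₀ t ⊆ Set.uIcc t₀ t₁ :=
      Set.uIcc_subset_uIcc (Set.left_mem_uIcc) (by
        rw [Set.uIcc_of_le ht.le]; exact ⟨ht0.le, ht1⟩)
    have hsub2 : Set.uIcc t t₁ ⊆ Set.uIcc t₀ t₁ :=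
      Set.uIcc_subset_uIcc (by rw [Set.uIcc_of_le ht.le]; exact ⟨ht0.le, ht1⟩)
        (Set.right_mem_uIcc)
    have hint1 : IntervalIntegrable (fun u => (ftilde u) ^ 2) volume t₀ t :=
      hfint.mono_set hsub1
    have hint2 : IntervalIntegrable (fun u => (ftilde u) ^ 2) volume t t₁ :=
      hfint.mono_set hsub2
    constructor
    · rw [he]
      apply intervalIntegral.intervalIntegral_pos_of_pos_on hint1 _ ht0
      intro x hx
      have hxI : x ∈ Set.Icc t₀ t₁ := ⟨hx.1.le, hx.2.le.trans ht1⟩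
      have : -c ≤ f x := (abs_le.mp (hbound x hxI)).1
      have hfx : 0 < ftilde x := by rw [hftilde]; linarith
      positivity
    · have hadd : etilde t + ∫ u in t..t₁, (ftilde u) ^ 2 = Etilde := by
        rw [he, hE, he]
        exact intervalIntegral.integral_add_adjacent_intervals hint1 hint2
      have hnn : 0 ≤ ∫ u in t..t₁, (ftilde u) ^ 2 :=
        intervalIntegral.integral_nonneg ht1 (fun u _ => sq_nonneg _)
      linarith
  -- pointwise lower bound on the integrand
  have hpt : ∀ t ∈ Set.Ioc t₀ t₁,
      1 / (π * Real.sqrt (α * Etilde)) ≤ ftilde t + b t := by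
    intro t ht'
    obtain ⟨hep, hel⟩ := hmono t ht'
    rw [hbias t ht', hftilde]
    have hfc : -c ≤ f t := (abs_le.mp (hbound t ⟨ht'.1.le, ht'.2⟩)).1
    have hden : 0 < π * Real.sqrt (α * etilde t) := by positivity
    have h1 : 1 / (π * Real.sqrt (α * Etilde)) ≤ 1 / (π * Real.sqrt (α * etilde t)) := by
      apply one_div_le_one_div_of_le hden
      gcongr
    linarith
  -- integral comparison
  have hle : (t₁ - t₀) * (1 / (π * Real.sqrt (α * Etilde))) ≤ 1 / K := by
    rw [← hfire]
    have hne : ∀ᵐ x ∂(volume : Measure ℝ), x ≠ t₀ := by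
      simp [ae_iff]
    have hae : (fun _ : ℝ => 1 / (π * Real.sqrt (α * Etilde)))
        ≤ᵐ[volume.restrict (Set.Icc t₀ t₁)] fun t => ftilde t + b t := by
      rw [Filter.EventuallyLE, MeasureTheory.ae_restrict_iff' measurableSet_Icc]
      filter_upwards [hne] with x hx hxIcc
      exact hpt x ⟨lt_of_le_of_ne hxIcc.1 (Ne.symm hx), hxIcc.2⟩
    have h := intervalIntegral.integral_mono_ae_restrict ht.le
      (intervalIntegrable_const) hint hae
    rwa [intervalIntegral.integral_const, smul_eq_mul] at h
  have key : t₁ - t₀ ≤ π * Real.sqrt (α * Etilde) / K := by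
    rw [mul_one_div, div_le_div_iff₀ hC hKpos] at hle
    rw [le_div_iff₀ hKpos]
    linarith
  have hsqrtdiv : Real.sqrt (α * Etilde / (Dtilde + β * Etilde))
      = Real.sqrt (α * Etilde) / K := Real.sqrt_div hαE.le _
  constructor
  · rw [hsqrtdiv, mul_div_assoc] at *
    exact key
  · have hlt : α * Etilde / (Dtilde + β * Etilde) < Etilde / Dtilde := by
      rw [div_lt_div_iff₀ hDβE hDpos]
      nlinarith [mul_pos hEpos hDpos, mul_pos (mul_pos hβ hEpos) hEpos]
    exact mul_lt_mul_of_pos_left (Real.sqrt_lt_sqrt (by positivity) hlt) hπ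
end
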